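/- For all n ≥ 3, the rank of H^2(M̄_{0,n}, ℚ) equals 2^{n-1} - (n^2 - n + 2)/2, i.e. the coefficient a_{n,1} of t in P_n satisfies a_{n,1} = 2^{n-1} - (n^2 - n + 2)/2, where a_{n,k} are determined by the recursion P_3 = 1, P_n = P_{n-1}(1+t) + t·∑_{i=3}^{n-2} C(n-2,i-1) P_i P_{n+1-i}. -/

import Mathlib

open Polynomial Finset

/-!
Only the term `P (n-1) * 1` contributes to the constant term, so `P n` has constant term `1` for all `n ≥ 3`.
Reading off the coefficient of `t` then gives
`a (n+1) = a n + 1 + ∑_{i=3}^{n-1} C(n-1, i-1) = a n + 2^(n-1) - n`,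
and the closed form follows by induction from `a 3 = 0`.
-/

theorem sum_Ico_two_choose_add (m : ℕ) (hm : 2 ≤ m) :
    ∑ j ∈ Ico 2 m, m.choose j + (m + 2) = 2 ^ m := by
  rw [← Nat.sum_range_choose, sum_range_succ, ← sum_range_add_sum_Ico _ hm]
  simp only [sum_range_succ, sum_range_zero, Nat.choose_zero_right, Nat.choose_one_right,
    Nat.choose_self]
  ring

def SatisfiesKeelRecursion (P : ℕ → ℤ[X]) : Prop :=
  ∀ n, 3 < n → P n = P (n-1) * (1 + X) +
    X * ∑ i ∈ Icc 3 (n-2), ((n-2).choose (i-1) : ℤ[X]) * P i * P (n+1-i)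

namespace SatisfiesKeelRecursion

variable {P : ℕ → ℤ[X]}

theorem coeff_zero_eq (hrec : SatisfiesKeelRecursion P) {n : ℕ} (hn : 3 ≤ n) :
    (P n).coeff 0 = (P 3).coeff 0 := by
  induction n, hn using Nat.le_induction with
  | base => rfl
  | succ n _ ih =>
    rw [hrec (n+1) (by omega), Nat.add_sub_cancel]
    simp [mul_coeff_zero, ih]

theorem coeff_one_succ (hrec : SatisfiesKeelRecursion P) (h3 : (P 3).coeff 0 = 1) {n : ℕ}
    (hn : 3 ≤ n) : (P (n+1)).coeff 1 = (P n).coeff 1 + 2 ^ (n-1) - n := by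
  have hconst : ∀ i, 3 ≤ i → (P i).coeff 0 = 1 := fun i hi => (hrec.coeff_zero_eq hi).trans h3
  have hsum : ∑ i ∈ Icc 3 (n-1), ((n-1).choose (i-1) : ℤ) = 2 ^ (n-1) - n - 1 := by
    have hIcc : Icc 3 (n-1) = Ico (2+1) (n-1+1) := by ext; simp only [mem_Icc, mem_Ico]; omega
    rw [hIcc, ← sum_Ico_add' (fun i => ((n-1).choose (i-1) : ℤ))]
    have := sum_Ico_two_choose_add (n-1) (by omega)
    zify [(by omega : 1 ≤ n)] at this
    simp only [Nat.add_sub_cancel]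
    linarith
  rw [hrec (n+1) (by omega), Nat.add_sub_cancel, show n + 1 - 2 = n - 1 by omega,
    coeff_add, mul_add, mul_one, coeff_add, coeff_mul_X, coeff_X_mul, hconst n hn,
    finsetSum_coeff]
  have hterm : ∀ i ∈ Icc 3 (n-1),
      (((n-1).choose (i-1) : ℤ[X]) * P i * P (n+1+1-i)).coeff 0 = (n-1).choose (i-1) := by
    intro i hi
    rw [mem_Icc] at hi
    rw [mul_coeff_zero, mul_coeff_zero, hconst i (by omega), hconst (n+1+1-i) (by omega),
      mul_one, mul_one, ← C_eq_natCast, coeff_C_zero]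
  rw [sum_congr rfl hterm, hsum]
  ring

end SatisfiesKeelRecursion

theorem stmt12 (P : ℕ → Polynomial ℤ)
    (h3 : P 3 = 1)
    (hrec : ∀ n, 3 < n → P n = P (n-1) * (1 + X) +
      X * ∑ i ∈ Finset.Icc 3 (n-2), ((n-2).choose (i-1) : Polynomial ℤ) * P i * P (n+1-i)) :
    ∀ n : ℕ, 3 ≤ n →
      ((P n).coeff 1 : ℚ) = 2 ^ (n - 1) - ((n : ℚ)^2 - n + 2) / 2 := by
  have h30 : (P 3).coeff 0 = 1 := by rw [h3, coeff_one_zero]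
  intro n hn
  induction n, hn using Nat.le_induction with
  | base => norm_num [h3, coeff_one]
  | succ n hn ih =>
    have hpow : (2 : ℚ) ^ (n + 1 - 1) = 2 * 2 ^ (n - 1) := by
      rw [← pow_succ', Nat.add_sub_cancel, Nat.sub_add_cancel (by omega)]
    rw [SatisfiesKeelRecursion.coeff_one_succ hrec h30 hn, hpow]
    push_cast
    rw [ih]
    ring
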